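/- For every n ≥ 1, every binary sequence of length n that contains none of the blocks (011100), (001110), (001111100) as a contiguous sub-block can be converted to a ternary sequence satisfying the TGP(2) constraint by changing some of its 1's to −1's; that is, S_{F(2)}(n) ⊆ B_{3;2}(n). (Consequence of Lemma 11) -/

import Mathlib

/-- `x` is a ternary sequence: every entry lies in `{-1, 0, 1} ⊆ ℤ`. -/
def IsTernary {n : ℕ} (x : Fin n → ℤ) : Prop :=
  ∀ i, x i = -1 ∨ x i = 0 ∨ x i = 1

/-- A ternary sequence `x` of length `n` (0-indexed positions) satisfies the TGP(t)
constraint. -/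
def SatisfiesTGPt (t : ℕ) {n : ℕ} (x : Fin n → ℤ) : Prop :=
  ∀ k l m : Fin n, x k ≠ 0 → x k = x l → x l = x m →
    max (max |((k : ℕ) : ℤ) - ((l : ℕ) : ℤ)| |((l : ℕ) : ℤ) - ((m : ℕ) : ℤ)|)
        |((m : ℕ) : ℤ) - ((k : ℕ) : ℤ)| ≤ (t : ℤ) →
    ∀ i : Fin n, ((i : ℕ) : ℤ) = ((k : ℕ) : ℤ) + ((l : ℕ) : ℤ) - ((m : ℕ) : ℤ) →
      x i ≠ 0

/-- `B3t t n = ξ(T_{3;t}(n))`: binary sequences of length `n` obtainable as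
componentwise absolute values of TGP(t)-constrained ternary sequences. -/
def B3t (t n : ℕ) : Set (Fin n → Fin 2) :=
  {y | ∃ x : Fin n → ℤ, IsTernary x ∧ SatisfiesTGPt t x ∧
    y = fun i => if x i = 0 then 0 else 1}

/-- `y` contains the pattern `p` as a contiguous sub-block. -/
def HasBlock {n m : ℕ} (y : Fin n → Fin 2) (p : Fin m → Fin 2) : Prop :=
  ∃ i : ℕ, ∃ h : i + m ≤ n,
    ∀ j : Fin m, y ⟨i + j.val, by have := j.isLt; omega⟩ = p j

/-- `SF2 n`: binary sequences of length `n` avoiding all three forbidden blocks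
`(011100)`, `(001110)`, `(001111100)` of `F(2)`. -/
def SF2 (n : ℕ) : Set (Fin n → Fin 2) :=
  {y | ¬ HasBlock y ![0, 1, 1, 1, 0, 0] ∧ ¬ HasBlock y ![0, 0, 1, 1, 1, 0] ∧
       ¬ HasBlock y ![0, 0, 1, 1, 1, 1, 1, 0, 0]}

/-!
TGP(2) holds as soon as every same-signed pair at distance one or two has both reflections
in the support (or outside `[0, n)`) and no three consecutive entries agree. Sign each
maximal run of ones by the pattern `+ − − + + − − …`, so that equal neighbours are interior
to their run, and give the two ones around an isolated zero opposite signs. A run of odd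
length needs one defect in this pattern: a same-signed pair at distance two, or an equal
pair at an end of the sequence. The forbidden blocks make room for it: a run of length
three away from both ends has a one two steps away on each side, and a run of length five
has one on at least one side.
-/

namespace TGP2

theorem satisfiesTGPt_two_of_pairs_of_triples {n : ℕ} {x : Fin n → ℤ}
    (pair : ∀ a b c : Fin n, x a ≠ 0 → x a = x b → (a : ℕ) < b → (b : ℕ) ≤ a + 2 →
      ((c : ℕ) + b = a + a ∨ (c : ℕ) + a = b + b) → x c ≠ 0)
    (triple : ∀ a b c : Fin n, (b : ℕ) = a + 1 → (c : ℕ) = a + 2 →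
      x a ≠ 0 → x a = x b → x b = x c → False) :
    SatisfiesTGPt 2 x := by
  intro k l m hk hkl hlm hdist i hi
  simp only [max_le_iff, abs_le] at hdist
  have hl : x l ≠ 0 := hkl ▸ hk
  by_cases hmk : m = k
  · obtain rfl : i = l := by omega
    exact hl
  by_cases hml : m = l
  · obtain rfl : i = k := by omega
    exact hk
  by_cases hkl' : k = l
  · subst hkl'
    rcases Fin.lt_or_lt_of_ne hmk with h | h
    · exact pair m k i (hlm ▸ hk) hlm.symm h (by omega) (Or.inr (by omega))
    · exact pair k m i hk hlm h (by omega) (Or.inl (by omega))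
  · -- three distinct positions pairwise at distance at most two are `a, a + 1, a + 2`
    have hval : ∀ j (hj : j < n), (j = k ∨ j = l ∨ j = m) → x ⟨j, hj⟩ = x k := by
      rintro j hj (h | h | h) <;> obtain rfl : (⟨j, hj⟩ : Fin n) = _ := Fin.ext h
      exacts [rfl, hkl.symm, (hkl.trans hlm).symm]
    obtain ⟨a, ha⟩ : ∃ a, a = min (min (k : ℕ) l) m := ⟨_, rfl⟩
    exact (triple ⟨a, by omega⟩ ⟨a + 1, by omega⟩ ⟨a + 2, by omega⟩ rfl rfl
      (by rwa [hval a _ (by omega)]) (by rw [hval a _ (by omega), hval (a + 1) _ (by omega)])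
      (by rw [hval (a + 1) _ (by omega), hval (a + 2) _ (by omega)])).elim

section Signing

variable {n : ℕ} (y : Fin n → Fin 2)

def IsOne (i : ℕ) : Prop := ∃ h : i < n, y ⟨i, h⟩ = 1

instance : DecidablePred (IsOne y) := fun _ => inferInstanceAs (Decidable (∃ _ : _, _))

-- The position two steps outside the run `[s, e)` is a one or lies outside `[0, n)`.
def SupportedLeft (s : ℕ) : Prop := s < 2 ∨ IsOne y (s - 2)
def SupportedRight (e : ℕ) : Prop := n ≤ e + 1 ∨ IsOne y (e + 1)

instance : DecidablePred (SupportedLeft y) := fun _ => inferInstanceAs (Decidable (_ ∨ _))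

instance : DecidablePred (SupportedRight y) := fun _ => inferInstanceAs (Decidable (_ ∨ _))

structure IsRun (s e : ℕ) : Prop where
  isOne : ∀ j, s ≤ j → j < e → IsOne y j
  not_isOne_pred : s = 0 ∨ ¬ IsOne y (s - 1)
  not_isOne : ¬ IsOne y e

def runStart : ℕ → ℕ
  | 0 => 0
  | i + 1 => if IsOne y i then runStart i else i + 1

theorem exists_ge_not_isOne (i : ℕ) : ∃ j, i ≤ j ∧ ¬ IsOne y j :=
  ⟨i + n, by omega, fun ⟨_, _⟩ => by omega⟩

def runEnd (i : ℕ) : ℕ := Nat.find (exists_ge_not_isOne y i)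

variable {y}

theorem IsOne.lt {i : ℕ} (h : IsOne y i) : i < n := h.1

theorem isOne_iff_eq_one (i : Fin n) : IsOne y i ↔ y i = 1 :=
  ⟨fun ⟨_, h⟩ => h, fun h => ⟨i.2, h⟩⟩

theorem runStart_le (i : ℕ) : runStart y i ≤ i := by
  induction i with
  | zero => rfl
  | succ i ih => unfold runStart; split_ifs <;> omega

theorem runStart_succ {i : ℕ} (h : IsOne y i) : runStart y (i + 1) = runStart y i :=
  if_pos h

theorem isOne_of_runStart_le {i j : ℕ} (hj : runStart y i ≤ j) (hji : j < i) : IsOne y j := by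
  induction i with
  | zero => omega
  | succ i ih =>
    by_cases h : IsOne y i
    · rw [runStart_succ h] at hj
      rcases Nat.lt_succ_iff_lt_or_eq.1 hji with hji | rfl
      exacts [ih hj hji, h]
    · simp only [runStart, if_neg h] at hj
      omega

theorem runStart_eq_zero_or (i : ℕ) : runStart y i = 0 ∨ ¬ IsOne y (runStart y i - 1) := by
  induction i with
  | zero => exact .inl rfl
  | succ i ih =>
    by_cases h : IsOne y i
    · rwa [runStart_succ h]
    · simp only [runStart, if_neg h]
      exact .inr h

theorem le_runEnd (i : ℕ) : i ≤ runEnd y i := (Nat.find_spec (exists_ge_not_isOne y i)).1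

theorem not_isOne_runEnd (i : ℕ) : ¬ IsOne y (runEnd y i) :=
  (Nat.find_spec (exists_ge_not_isOne y i)).2

theorem runEnd_le {i j : ℕ} (hij : i ≤ j) (hj : ¬ IsOne y j) : runEnd y i ≤ j :=
  Nat.find_min' _ ⟨hij, hj⟩

theorem isOne_of_lt_runEnd {i j : ℕ} (hij : i ≤ j) (hj : j < runEnd y i) : IsOne y j :=
  not_not.1 fun h => Nat.find_min (exists_ge_not_isOne y i) hj ⟨hij, h⟩

theorem lt_runEnd {i : ℕ} (h : IsOne y i) : i < runEnd y i :=
  (le_runEnd i).lt_of_ne fun he => not_isOne_runEnd i (he ▸ h)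

theorem runEnd_succ {i : ℕ} (h : IsOne y i) : runEnd y (i + 1) = runEnd y i :=
  le_antisymm (runEnd_le (lt_runEnd h) (not_isOne_runEnd i))
    (runEnd_le ((Nat.le_succ i).trans (le_runEnd _)) (not_isOne_runEnd _))

theorem isRun_run (i : ℕ) : IsRun y (runStart y i) (runEnd y i) where
  isOne j hs he := (le_or_gt i j).elim (isOne_of_lt_runEnd · he) (isOne_of_runStart_le hs)
  not_isOne_pred := runStart_eq_zero_or i
  not_isOne := not_isOne_runEnd i

theorem IsRun.le_length {s e : ℕ} (hr : IsRun y s e) (hse : s < e) : e ≤ n := by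
  have := (hr.isOne (e - 1) (by omega) (by omega)).lt
  omega

theorem hasBlock_of_isOne_iff {m : ℕ} {p : Fin m → Fin 2} (i : ℕ) (hi : i + m ≤ n)
    (h : ∀ j : Fin m, IsOne y (i + j) ↔ p j = 1) : HasBlock y p := by
  refine ⟨i, hi, fun j => ?_⟩
  have := (isOne_iff_eq_one ⟨i + j, by omega⟩).symm.trans (h j)
  omega

theorem IsRun.supportedRight_of_three (hy : ¬ HasBlock y ![0, 1, 1, 1, 0, 0]) {s : ℕ}
    (hr : IsRun y s (s + 3)) (hs : 1 ≤ s) : SupportedRight y (s + 3) := by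
  by_contra hR
  simp only [SupportedRight, not_or, not_le] at hR
  obtain ⟨t, rfl⟩ : ∃ t, s = t + 1 := ⟨s - 1, by omega⟩
  have hpred : ¬ IsOne y t := hr.not_isOne_pred.resolve_left (by omega)
  refine hy (hasBlock_of_isOne_iff t (by omega) fun j => ?_)
  fin_cases j <;> simp [hr.isOne, hr.not_isOne, hpred, hR.2]

theorem IsRun.supportedLeft_of_three (hy : ¬ HasBlock y ![0, 0, 1, 1, 1, 0]) {s : ℕ}
    (hr : IsRun y s (s + 3)) (hn : s + 3 < n) : SupportedLeft y s := by
  by_contra hL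
  simp only [SupportedLeft, not_or, not_lt] at hL
  obtain ⟨t, rfl⟩ : ∃ t, s = t + 2 := ⟨s - 2, by omega⟩
  have hpred : ¬ IsOne y (t + 1) := hr.not_isOne_pred.resolve_left (by omega)
  have hpred2 : ¬ IsOne y t := by simpa using hL.2
  refine hy (hasBlock_of_isOne_iff t (by omega) fun j => ?_)
  fin_cases j <;> simp [hr.isOne, hr.not_isOne, hpred, hpred2]

theorem IsRun.supported_of_five (hy : ¬ HasBlock y ![0, 0, 1, 1, 1, 1, 1, 0, 0]) {s : ℕ}
    (hr : IsRun y s (s + 5)) : SupportedLeft y s ∨ SupportedRight y (s + 5) := by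
  by_contra h
  simp only [SupportedLeft, SupportedRight, not_or, not_lt, not_le] at h
  obtain ⟨⟨hs, hL⟩, hn, hR⟩ := h
  obtain ⟨t, rfl⟩ : ∃ t, s = t + 2 := ⟨s - 2, by omega⟩
  have hpred : ¬ IsOne y (t + 1) := hr.not_isOne_pred.resolve_left (by omega)
  have hpred2 : ¬ IsOne y t := by simpa using hL
  refine hy (hasBlock_of_isOne_iff t (by omega) fun j => ?_)
  fin_cases j <;> simp [hr.isOne, hr.not_isOne, hpred, hpred2, hR]

/- In the run `[s, e)` the sign changes from offset `d - 1` to offset `d` iff `d` is odd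
below the defect `p`, and iff `d` is even from `p` on. A defect at `0` makes the first two
entries equal (harmless at the start of the sequence), one at `2` or `4` makes offsets
`p - 2` and `p` equal; `p = e - s` means no defect, which suits even runs and runs ending
at `n`. -/
variable (y) in
def defect (s e : ℕ) : ℕ :=
  if (e - s) % 2 = 0 ∨ e = n then e - s
  else if s = 0 then 0
  else if SupportedLeft y s ∧ (s + 5 ≤ e ∨ SupportedRight y e) then 2
  else 4

variable (y) in
def RunChange (s e d : ℕ) : Prop := d % 2 = 1 ↔ d < defect y s e

instance (s e d : ℕ) : Decidable (RunChange y s e d) := inferInstanceAs (Decidable (_ ↔ _))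

theorem runChange_or_runChange_succ {s e d : ℕ} (hd : 1 ≤ d) (hde : s + d + 1 < e) :
    RunChange y s e d ∨ RunChange y s e (d + 1) := by
  unfold RunChange defect
  split_ifs <;> omega

theorem IsRun.boundary_of_not_runChange (hy : y ∈ SF2 n) {s e d : ℕ} (hr : IsRun y s e)
    (hd : 1 ≤ d) (hde : s + d < e) (h : ¬ RunChange y s e d) :
    (d = 1 → s = 0) ∧ (s + d + 1 = e → e = n) := by
  have hen := hr.le_length (by omega)
  have h3R : e = s + 3 → 1 ≤ s → SupportedRight y e := by
    rintro rfl; exact hr.supportedRight_of_three hy.1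
  have h3L : e = s + 3 → e < n → SupportedLeft y s := by
    rintro rfl; exact hr.supportedLeft_of_three hy.2.1
  by_cases hL : SupportedLeft y s <;> by_cases hR : SupportedRight y e <;>
    simp only [RunChange, defect, hL, hR, true_and, false_and, or_true, or_false,
      imp_false, if_false] at h h3R h3L <;> split_ifs at h <;> omega

theorem IsRun.supported_of_runChange_runChange (hy : y ∈ SF2 n) {s e d : ℕ} (hr : IsRun y s e)
    (hd : 1 ≤ d) (hde : s + d + 1 < e) (h : RunChange y s e d) (h' : RunChange y s e (d + 1)) :
    (d = 1 ∧ SupportedLeft y s ∧ (s + 5 ≤ e ∨ e = s + 3 ∧ SupportedRight y e)) ∨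
      (d = 3 ∧ (s + 7 ≤ e ∨ e = s + 5 ∧ SupportedRight y e)) := by
  have h5 : e = s + 5 → SupportedLeft y s ∨ SupportedRight y e := by
    rintro rfl; exact hr.supported_of_five hy.2.2
  by_cases hL : SupportedLeft y s <;> by_cases hR : SupportedRight y e <;>
    simp only [RunChange, defect, hL, hR, true_and, false_and, and_true, and_false, or_true,
      or_false, imp_false, if_false] at h h' h5 ⊢ <;> split_ifs at h h' <;> omega

variable (y) in
def signChange (i : ℕ) : Bool :=
  decide (RunChange y (runStart y i) (runEnd y i) (i - runStart y i))

-- `true` marks the ones that become `-1`; across an isolated zero the sign flips.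
variable (y) in
def negated : ℕ → Bool
  | 0 => false
  | 1 => signChange y 1
  | i + 2 => if IsOne y (i + 1) then negated (i + 1) ^^ signChange y (i + 2) else !negated i

theorem negated_succ {i : ℕ} (h : IsOne y i) :
    negated y (i + 1) = (negated y i ^^ signChange y (i + 1)) := by
  cases i <;> simp [negated, h]

theorem negated_add_two {i : ℕ} (h : ¬ IsOne y (i + 1)) : negated y (i + 2) = !negated y i := by
  simp [negated, h]

theorem signChange_succ {i : ℕ} (h : IsOne y i) : signChange y (i + 1) =
    decide (RunChange y (runStart y i) (runEnd y i) (i + 1 - runStart y i)) := by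
  rw [signChange, runStart_succ h, runEnd_succ h]

theorem negated_eq_succ_iff {i : ℕ} (h : IsOne y i) : negated y i = negated y (i + 1) ↔
    ¬ RunChange y (runStart y i) (runEnd y i) (i + 1 - runStart y i) := by
  rw [negated_succ h, signChange_succ h]
  cases negated y i <;> simp

theorem negated_eq_add_two_iff {i : ℕ} (h : IsOne y i) (h1 : IsOne y (i + 1)) :
    negated y i = negated y (i + 2) ↔
      (RunChange y (runStart y i) (runEnd y i) (i + 1 - runStart y i) ↔
        RunChange y (runStart y i) (runEnd y i) (i + 2 - runStart y i)) := by
  rw [negated_succ h1, negated_succ h, signChange_succ h, signChange_succ h1, runStart_succ h,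
    runEnd_succ h]
  cases negated y i <;> simp

theorem isOne_of_negated_eq_succ (hy : y ∈ SF2 n) {a c : ℕ} (ha : IsOne y a)
    (ha1 : IsOne y (a + 1)) (heq : negated y a = negated y (a + 1)) (hc : c < n)
    (hca : c + 1 = a ∨ c = a + 2) : IsOne y c := by
  have hr := isRun_run (y := y) a
  have hs := runStart_le (y := y) a
  have he := lt_runEnd ha1
  rw [runEnd_succ ha] at he
  have := hr.boundary_of_not_runChange hy (by omega) (by omega) ((negated_eq_succ_iff ha).1 heq)
  exact hr.isOne c (by omega) (by omega)

theorem isOne_of_negated_eq_add_two (hy : y ∈ SF2 n) {a c : ℕ} (ha : IsOne y a)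
    (ha2 : IsOne y (a + 2)) (heq : negated y a = negated y (a + 2)) (hc : c < n)
    (hca : c + 2 = a ∨ c = a + 4) : IsOne y c := by
  by_cases ha1 : IsOne y (a + 1)
  swap
  · rw [negated_add_two ha1] at heq
    simp at heq
  have hs := runStart_le (y := y) a
  have he := lt_runEnd ha2
  rw [runEnd_succ ha1, runEnd_succ ha] at he
  have hiff := (negated_eq_add_two_iff ha ha1).1 heq
  set s := runStart y a
  set e := runEnd y a
  have hr : IsRun y s e := isRun_run a
  obtain ⟨d, hd⟩ : ∃ d, d = a + 1 - s := ⟨_, rfl⟩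
  rw [← hd, show a + 2 - s = d + 1 by omega] at hiff
  have hch : RunChange y s e d ∧ RunChange y s e (d + 1) := by
    rcases runChange_or_runChange_succ (y := y) (s := s) (e := e) (d := d)
      (by omega) (by omega) with h | h
    exacts [⟨h, hiff.1 h⟩, ⟨hiff.2 h, h⟩]
  have hcases := hr.supported_of_runChange_runChange hy (by omega) (by omega) hch.1 hch.2
  rcases hca with hca | rfl
  · rcases hcases with ⟨hd1, hL | hL, -⟩ | ⟨hd3, -⟩
    · omega
    · rwa [show c = s - 2 by omega]
    · exact hr.isOne _ (by omega) (by omega)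
  · rcases hcases with ⟨hd1, -, hR | ⟨he', hR | hR⟩⟩ | ⟨hd3, hR | ⟨he', hR | hR⟩⟩ <;>
      first
        | omega
        | exact hr.isOne _ (by omega) (by omega)
        | rwa [show a + 4 = e + 1 by omega]

theorem not_negated_eq_and_eq {a : ℕ} (ha : IsOne y a) (ha1 : IsOne y (a + 1))
    (ha2 : IsOne y (a + 2)) (h : negated y a = negated y (a + 1))
    (h' : negated y (a + 1) = negated y (a + 2)) : False := by
  have hs := runStart_le (y := y) a
  have he := lt_runEnd ha2
  rw [runEnd_succ ha1, runEnd_succ ha] at he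
  rw [negated_eq_succ_iff ha] at h
  rw [negated_eq_succ_iff ha1, runStart_succ ha, runEnd_succ ha,
    show a + 1 + 1 - runStart y a = a + 1 - runStart y a + 1 by omega] at h'
  exact (runChange_or_runChange_succ (by omega) (by omega)).elim h h'

variable (y) in
def signedSeq (i : Fin n) : ℤ := if y i = 1 then (if negated y i then -1 else 1) else 0

theorem isTernary_signedSeq : IsTernary (signedSeq y) := fun i => by
  unfold signedSeq
  split_ifs <;> simp

theorem signedSeq_ne_zero_iff {i : Fin n} : signedSeq y i ≠ 0 ↔ IsOne y i := by
  rw [isOne_iff_eq_one]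
  unfold signedSeq
  split_ifs <;> simp [*]

theorem signedSeq_eq_iff {i j : Fin n} (hi : IsOne y i) (hj : IsOne y j) :
    signedSeq y i = signedSeq y j ↔ negated y i = negated y j := by
  rw [isOne_iff_eq_one] at hi hj
  simp only [signedSeq, hi, hj, if_true]
  cases negated y i <;> cases negated y j <;> simp

theorem satisfiesTGPt_signedSeq (hy : y ∈ SF2 n) : SatisfiesTGPt 2 (signedSeq y) := by
  apply satisfiesTGPt_two_of_pairs_of_triples
  · rintro ⟨a, _⟩ ⟨b, _⟩ c ha hab hlt hle hc
    rw [signedSeq_ne_zero_iff] at ha ⊢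
    dsimp only at ha hlt hle hc
    have hb := signedSeq_ne_zero_iff.1 (hab ▸ signedSeq_ne_zero_iff.2 ha)
    rw [signedSeq_eq_iff ha hb] at hab
    obtain rfl | rfl : b = a + 1 ∨ b = a + 2 := by omega
    · exact isOne_of_negated_eq_succ hy ha hb hab c.2 (by omega)
    · exact isOne_of_negated_eq_add_two hy ha hb hab c.2 (by omega)
  · rintro ⟨a, _⟩ ⟨b, _⟩ ⟨c, _⟩ rfl rfl ha hab hbc
    rw [signedSeq_ne_zero_iff] at ha
    have hb := signedSeq_ne_zero_iff.1 (hab ▸ signedSeq_ne_zero_iff.2 ha)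
    have hc := signedSeq_ne_zero_iff.1 (hbc ▸ hab ▸ signedSeq_ne_zero_iff.2 ha)
    exact not_negated_eq_and_eq ha hb hc ((signedSeq_eq_iff ha hb).1 hab)
      ((signedSeq_eq_iff hb hc).1 hbc)

theorem ite_signedSeq_eq_zero : (fun i => if signedSeq y i = 0 then 0 else 1) = y := by
  funext i
  by_cases h : y i = 1
  · rw [if_neg (signedSeq_ne_zero_iff.2 ((isOne_iff_eq_one i).2 h)), h]
  · rw [if_pos (not_not.1 (mt signedSeq_ne_zero_iff.1 (mt (isOne_iff_eq_one i).1 h)))]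
    omega

end Signing

end TGP2

theorem SF2_subset_B32_general (n : ℕ) : SF2 n ⊆ B3t 2 n := fun y hy =>
  ⟨TGP2.signedSeq y, TGP2.isTernary_signedSeq, TGP2.satisfiesTGPt_signedSeq hy,
    TGP2.ite_signedSeq_eq_zero.symm⟩

/-- **Consequence of Lemma 11.** For every `n ≥ 1`, every binary sequence of
length `n` avoiding the three forbidden blocks of `F(2)` can be converted into a
TGP(2)-constrained ternary sequence by changing some of its ones to `-1`:
`S_{F(2)}(n) ⊆ B_{3;2}(n)`. -/
theorem SF2_subset_B32 (n : ℕ) (hn : 1 ≤ n) : SF2 n ⊆ B3t 2 n :=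
  SF2_subset_B32_general n
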